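/- Under the SGD setup, suppose in addition that f is approximately convex in the sense that there exist constants 0 < c ≤ C with c·f(w) ≤ |∇f(w)|² ≤ C·f(w) and c·|w|² ≤ f(w) ≤ C·|w|² for all w; that the step sizes α_m are nonincreasing with 0 ≤ α_m ≤ 1/L, ∑_{m=1}^∞ α_m = ∞, and α_m → 0 as m → ∞; and that E[f(w_1)] < ∞. Then E[f(w_m)] → 0, E[|w_m|²] → 0, and E[|∇f(w_m)|²] → 0 as m → ∞; in particular w_m → 0 in probability. -/

import Mathlib

open Filter MeasureTheory ProbabilityTheory

/-- Robbins-Monro style recursion lemma. -/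
lemma sgd_seq_lemma (a b : ℕ → ℝ) (K : ℝ) (hK : 0 ≤ K) (ha : ∀ n, 0 ≤ a n)
    (hb0 : ∀ n, 0 ≤ b n) (hb1 : ∀ n, b n ≤ 1)
    (hrec : ∀ n, a (n + 1) ≤ (1 - b n) * a n + K * b n ^ 2)
    (hbtend : Tendsto b atTop (nhds 0))
    (hbdiv : Tendsto (fun M => ∑ m ∈ Finset.range M, b m) atTop atTop) :
    Tendsto a atTop (nhds 0) := by
  have key : ∀ ε : ℝ, 0 < ε → ∀ᶠ n in atTop, a n ≤ ε := by
    intro ε hε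
    -- choose N₁ with K * b n ≤ ε/2 for n ≥ N₁
    have h1 : ∀ᶠ n in atTop, K * b n ≤ ε / 2 := by
      have hb' : ∀ᶠ n in atTop, b n ≤ ε / (2 * (K + 1)) := by
        have := hbtend.eventually_le_const (show (0:ℝ) < ε / (2 * (K + 1)) by positivity)
        exact this
      filter_upwards [hb'] with n hn
      have hK1 : K ≤ K + 1 := by linarith
      have : K * b n ≤ (K + 1) * (ε / (2 * (K + 1))) :=
        mul_le_mul hK1 hn (hb0 n) (by positivity)
      calc K * b n ≤ (K + 1) * (ε / (2 * (K + 1))) := this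
        _ = ε / 2 := by field_simp
    obtain ⟨N₁, hN₁⟩ := h1.exists_forall_of_atTop
    -- persistence
    have hpersist : ∀ n, N₁ ≤ n → a n ≤ ε → ∀ k, a (n + k) ≤ ε := by
      intro n hn han k
      induction k with
      | zero => simpa using han
      | succ k ih =>
        have hb := hN₁ (n + k) (by omega)
        have h0 := hb0 (n + k); have h1' := hb1 (n + k)
        have := hrec (n + k)
        have hKb : K * b (n + k) ^ 2 ≤ ε / 2 * b (n + k) := by
          have : K * b (n + k) * b (n + k) ≤ ε / 2 * b (n + k) :=
            mul_le_mul_of_nonneg_right hb h0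
          nlinarith
        show a (n + k + 1) ≤ ε
        nlinarith
    -- hitting
    have hhit : ∃ n, N₁ ≤ n ∧ a n ≤ ε := by
      by_contra hno
      push_neg at hno
      have hstep : ∀ k, a (N₁ + k) ≤ a N₁ - ε / 2 * ∑ j ∈ Finset.range k, b (N₁ + j) := by
        intro k
        induction k with
        | zero => simp
        | succ k ih =>
          have hgt : ε < a (N₁ + k) := hno (N₁ + k) (by omega)
          have hb := hN₁ (N₁ + k) (by omega)
          have h0 := hb0 (N₁ + k)
          have := hrec (N₁ + k)
          have hKb : K * b (N₁ + k) ^ 2 ≤ ε / 2 * b (N₁ + k) := by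
            have : K * b (N₁ + k) * b (N₁ + k) ≤ ε / 2 * b (N₁ + k) :=
              mul_le_mul_of_nonneg_right hb h0
            nlinarith
          rw [Finset.sum_range_succ]
          have : a (N₁ + k + 1) ≤ a (N₁ + k) - ε / 2 * b (N₁ + k) := by nlinarith
          have h2 : a (N₁ + (k+1)) ≤ a (N₁ + k) - ε / 2 * b (N₁ + k) := this
          linarith
      -- tail sums tend to infinity
      have htail : Tendsto (fun k => ∑ j ∈ Finset.range k, b (N₁ + j)) atTop atTop := by
        have h2 : Tendsto (fun k => ∑ m ∈ Finset.range (k + N₁), b m) atTop atTop :=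
          hbdiv.comp (tendsto_add_atTop_nat N₁)
        have h3 : ∀ k, ∑ m ∈ Finset.range (k + N₁), b m
            = (∑ m ∈ Finset.range N₁, b m) + ∑ j ∈ Finset.range k, b (N₁ + j) := by
          intro k; rw [Nat.add_comm]; exact Finset.sum_range_add b N₁ k
        have h4 : Tendsto (fun k => (∑ m ∈ Finset.range N₁, b m)
            + ∑ j ∈ Finset.range k, b (N₁ + j)) atTop atTop := by
          simpa [h3] using h2
        simpa using tendsto_atTop_add_const_left _ (-(∑ m ∈ Finset.range N₁, b m)) h4
      obtain ⟨k, hk⟩ := (htail.eventually_gt_atTop (2 / ε * a N₁)).exists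
      have h5 := hstep k
      have h6 := ha (N₁ + k)
      have : ε / 2 * (2 / ε * a N₁) < ε / 2 * ∑ j ∈ Finset.range k, b (N₁ + j) := by
        apply mul_lt_mul_of_pos_left hk (by positivity)
      have heq : ε / 2 * (2 / ε * a N₁) = a N₁ := by field_simp
      nlinarith
    obtain ⟨n, hn, han⟩ := hhit
    filter_upwards [eventually_ge_atTop n] with m hm
    have := hpersist n hn han (m - n)
    simpa [Nat.add_sub_cancel' hm] using this
  rw [Metric.tendsto_atTop]
  intro ε hε
  obtain ⟨N, hN⟩ := (key (ε / 2) (by positivity)).exists_forall_of_atTop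
  exact ⟨N, fun n hn => by
    have := hN n hn
    have := ha n
    rw [Real.dist_eq]
    rw [abs_of_nonneg (by linarith)]
    simpa using by linarith⟩

/-- Descent lemma for functions with Lipschitz gradient. -/
lemma sgd_descent {F : Type*} [NormedAddCommGroup F] [InnerProductSpace ℝ F] [CompleteSpace F]
    (f : F → ℝ) (L : ℝ) (hL : 0 ≤ L) (hdiff : Differentiable ℝ f)
    (hlip : LipschitzWith L.toNNReal (gradient f)) (x y : F) :
    f y ≤ f x + inner ℝ (gradient f x) (y - x) + L / 2 * ‖y - x‖ ^ 2 := by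
  set v := y - x with hv
  have hgradlip : ∀ a b : F, ‖gradient f a - gradient f b‖ ≤ L * ‖a - b‖ := by
    intro a b
    have := hlip.dist_le_mul a b
    rwa [dist_eq_norm, dist_eq_norm, Real.coe_toNNReal L hL] at this
  have hfd : ∀ z : F, ∀ u : F, (fderiv ℝ f z) u = inner ℝ (gradient f z) u := by
    intro z u
    have : fderiv ℝ f z = InnerProductSpace.toDual ℝ F (gradient f z) := by
      simp [gradient]
    rw [this, InnerProductSpace.toDual_apply_apply]
  set ψ : ℝ → ℝ := fun t => f (x + t • v) - t * inner ℝ (gradient f x) v - L / 2 * t ^ 2 * ‖v‖ ^ 2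
    with hψ
  have hpath : ∀ t : ℝ, HasDerivAt (fun s : ℝ => x + s • v) v t := by
    intro t
    simpa using ((hasDerivAt_id t).smul_const v).const_add x
  have hψd : ∀ t : ℝ, HasDerivAt ψ
      ((inner ℝ (gradient f (x + t • v)) v : ℝ) - inner ℝ (gradient f x) v - L * t * ‖v‖ ^ 2) t := by
    intro t
    have h1 : HasDerivAt (fun s : ℝ => f (x + s • v)) ((fderiv ℝ f (x + t • v)) v) t :=
      (hdiff (x + t • v)).hasFDerivAt.comp_hasDerivAt t (hpath t)
    rw [hfd] at h1
    have h2 : HasDerivAt (fun s : ℝ => s * (inner ℝ (gradient f x) v : ℝ))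
        (inner ℝ (gradient f x) v) t := by
      simpa using (hasDerivAt_id t).mul_const (inner ℝ (gradient f x) v : ℝ)
    have h3 : HasDerivAt (fun s : ℝ => L / 2 * s ^ 2 * ‖v‖ ^ 2) (L * t * ‖v‖ ^ 2) t := by
      have := ((hasDerivAt_pow 2 t).const_mul (L / 2)).mul_const (‖v‖ ^ 2)
      exact this.congr_deriv (by push_cast; ring)
    exact (h1.sub h2).sub h3
  have hmono : AntitoneOn ψ (Set.Icc (0:ℝ) 1) := by
    apply antitoneOn_of_deriv_nonpos (convex_Icc 0 1)
    · exact fun t _ => ((hψd t).continuousAt).continuousWithinAt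
    · intro t ht
      exact ((hψd t).differentiableAt).differentiableWithinAt
    · intro t ht
      rw [interior_Icc] at ht
      rw [(hψd t).deriv]
      have ht0 : 0 ≤ t := le_of_lt ht.1
      have hinner : (inner ℝ (gradient f (x + t • v)) v : ℝ) - inner ℝ (gradient f x) v
          ≤ L * t * ‖v‖ ^ 2 := by
        have h4 : (inner ℝ (gradient f (x + t • v)) v : ℝ) - inner ℝ (gradient f x) v
            = inner ℝ (gradient f (x + t • v) - gradient f x) v := by
          rw [inner_sub_left]
        rw [h4]
        calc (inner ℝ (gradient f (x + t • v) - gradient f x) v : ℝ)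
            ≤ ‖gradient f (x + t • v) - gradient f x‖ * ‖v‖ := real_inner_le_norm _ _
          _ ≤ L * ‖(x + t • v) - x‖ * ‖v‖ := by
              apply mul_le_mul_of_nonneg_right _ (norm_nonneg v)
              apply hgradlip
          _ = L * t * ‖v‖ ^ 2 := by
              simp [norm_smul, abs_of_nonneg ht0]
              ring
      linarith
  have h01 : ψ 1 ≤ ψ 0 := hmono (Set.mem_Icc.2 ⟨le_refl 0, zero_le_one⟩)
    (Set.mem_Icc.2 ⟨zero_le_one, le_refl 1⟩) zero_le_one
  have hψ0 : ψ 0 = f x := by simp [hψ]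
  have hψ1 : ψ 1 = f y - inner ℝ (gradient f x) v - L / 2 * ‖v‖ ^ 2 := by
    simp [hψ, hv]
  rw [hψ0, hψ1] at h01
  linarith

/-- For nonneg functions with L-Lipschitz gradient, `‖∇f‖² ≤ 2 L f`. -/
lemma sgd_grad_sq_le {F : Type*} [NormedAddCommGroup F] [InnerProductSpace ℝ F] [CompleteSpace F]
    (f : F → ℝ) (L : ℝ) (hL : 0 < L) (hdiff : Differentiable ℝ f)
    (hlip : LipschitzWith L.toNNReal (gradient f)) (hf0 : ∀ x, 0 ≤ f x) (x : F) :
    ‖gradient f x‖ ^ 2 ≤ 2 * L * f x := by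
  have h := sgd_descent f L hL.le hdiff hlip x (x - (1 / L) • gradient f x)
  have h0 := hf0 (x - (1 / L) • gradient f x)
  have he : x - (1 / L) • gradient f x - x = -((1 / L) • gradient f x) := by abel
  rw [he] at h
  rw [inner_neg_right, inner_smul_right, real_inner_self_eq_norm_sq] at h
  rw [norm_neg, norm_smul] at h
  have : |1 / L| = 1 / L := abs_of_pos (by positivity)
  rw [Real.norm_eq_abs, this] at h
  have hsimp : f x + -(1 / L * ‖gradient f x‖ ^ 2) + L / 2 * (1 / L * ‖gradient f x‖) ^ 2
      = f x - ‖gradient f x‖ ^ 2 / (2 * L) := by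
    field_simp
    ring
  rw [hsimp] at h
  have h2 : ‖gradient f x‖ ^ 2 / (2 * L) ≤ f x := by linarith
  rw [div_le_iff₀ (by positivity)] at h2
  linarith

/-- Conditional expectation commutes with continuous linear maps. -/
lemma sgd_condexp_clm {Ω : Type*} {m m0 : MeasurableSpace Ω} (hm : m ≤ m0) {μ : Measure Ω}
    [IsFiniteMeasure μ] {E F : Type*} [NormedAddCommGroup E] [NormedSpace ℝ E] [CompleteSpace E]
    [NormedAddCommGroup F] [NormedSpace ℝ F] [CompleteSpace F]
    (T : E →L[ℝ] F) {g : Ω → E} (hg : Integrable g μ) :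
    (fun ω => T ((μ[g|m]) ω)) =ᵐ[μ] μ[fun ω => T (g ω)|m] := by
  haveI : SigmaFinite (μ.trim hm) := by
    haveI := isFiniteMeasure_trim (μ := μ) hm
    infer_instance
  apply ae_eq_condExp_of_forall_setIntegral_eq hm (T.integrable_comp hg)
  · exact fun s _ _ => (T.integrable_comp integrable_condExp).integrableOn
  · intro s hs hμs
    rw [ContinuousLinearMap.integral_comp_comm T integrable_condExp.integrableOn,
      setIntegral_condExp hm hg hs,
      ← ContinuousLinearMap.integral_comp_comm T hg.integrableOn]
  · exact (T.continuous.comp_stronglyMeasurable (stronglyMeasurable_condExp (m := m))).aestronglyMeasurable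

lemma euclid_norm_sq_eq {d : ℕ} (x : EuclideanSpace ℝ (Fin d)) :
    ‖x‖ ^ 2 = ∑ i, x i ^ 2 := by
  exact EuclideanSpace.real_norm_sq_eq x

lemma euclid_coord_sq_le {d : ℕ} (x : EuclideanSpace ℝ (Fin d)) (i : Fin d) :
    x i ^ 2 ≤ ‖x‖ ^ 2 := by
  rw [euclid_norm_sq_eq]
  exact Finset.single_le_sum (fun j _ => sq_nonneg (x j)) (Finset.mem_univ i)

/-- The key identity `E⟪F, g⟫ = E‖F‖²` when `E[g|m] = F` with `F` `m`-measurable. -/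
lemma sgd_inner_integral {Ω : Type*} {m m0 : MeasurableSpace Ω} (hm : m ≤ m0) {μ : Measure Ω}
    [IsProbabilityMeasure μ] {d : ℕ} {F g : Ω → EuclideanSpace ℝ (Fin d)}
    (hF : StronglyMeasurable[m] F) (hgm : AEStronglyMeasurable g μ)
    (hF2 : Integrable (fun ω => ‖F ω‖ ^ 2) μ) (hg2 : Integrable (fun ω => ‖g ω‖ ^ 2) μ)
    (hcond : μ[g|m] =ᵐ[μ] F) :
    ∫ ω, (inner ℝ (F ω) (g ω) : ℝ) ∂μ = ∫ ω, ‖F ω‖ ^ 2 ∂μ := by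
  have hFm : AEStronglyMeasurable F μ := (hF.mono hm).aestronglyMeasurable
  have hgi : Integrable g μ := by
    refine Integrable.mono' ((integrable_const (1:ℝ)).add hg2) hgm ?_
    filter_upwards with ω
    have : ‖g ω‖ ≤ 1 + ‖g ω‖ ^ 2 := by nlinarith [norm_nonneg (g ω)]
    simpa using this
  have hsum : Integrable (fun ω => (‖F ω‖ ^ 2 + ‖g ω‖ ^ 2) / 2) μ := (hF2.add hg2).div_const 2
  have prodInt : ∀ i : Fin d, Integrable (fun ω => F ω i * g ω i) μ := by
    intro i
    refine Integrable.mono' hsum ?_ ?_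
    · exact (((EuclideanSpace.proj (𝕜 := ℝ) i).continuous.comp_stronglyMeasurable
        (hF.mono hm)).aestronglyMeasurable.mul
        ((EuclideanSpace.proj (𝕜 := ℝ) i).continuous.comp_aestronglyMeasurable hgm))
    · filter_upwards with ω
      have h1 := euclid_coord_sq_le (F ω) i
      have h2 := euclid_coord_sq_le (g ω) i
      have : |F ω i * g ω i| ≤ (‖F ω‖ ^ 2 + ‖g ω‖ ^ 2) / 2 := by
        rw [abs_mul]
        nlinarith [sq_abs (F ω i), sq_abs (g ω i), sq_nonneg (|F ω i| - |g ω i|),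
          abs_nonneg (F ω i), abs_nonneg (g ω i)]
      rw [Real.norm_eq_abs]
      exact this
  have sqInt : ∀ i : Fin d, Integrable (fun ω => F ω i * F ω i) μ := by
    intro i
    refine Integrable.mono' hF2 ?_ ?_
    · exact (((EuclideanSpace.proj (𝕜 := ℝ) i).continuous.comp_stronglyMeasurable
        (hF.mono hm)).aestronglyMeasurable.mul
        ((EuclideanSpace.proj (𝕜 := ℝ) i).continuous.comp_stronglyMeasurable
          (hF.mono hm)).aestronglyMeasurable)
    · filter_upwards with ω
      have h1 := euclid_coord_sq_le (F ω) i
      have : |F ω i * F ω i| ≤ ‖F ω‖ ^ 2 := by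
        rw [abs_mul, ← sq_abs (F ω i)] at *
        nlinarith [abs_nonneg (F ω i)]
      rw [Real.norm_eq_abs]
      exact this
  have hkey : ∀ i : Fin d, ∫ ω, F ω i * g ω i ∂μ = ∫ ω, F ω i * F ω i ∂μ := by
    intro i
    have hgii : Integrable (fun ω => g ω i) μ := by
      simpa using (EuclideanSpace.proj (𝕜 := ℝ) i).integrable_comp hgi
    have hFim : StronglyMeasurable[m] (fun ω => F ω i) :=
      (EuclideanSpace.proj (𝕜 := ℝ) i).continuous.comp_stronglyMeasurable hF
    have h1 : μ[fun ω => F ω i * g ω i|m] =ᵐ[μ]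
        (fun ω => F ω i) * μ[fun ω => g ω i|m] := by
      have := condExp_mul_of_stronglyMeasurable_left hFim
        (show Integrable ((fun ω => F ω i) * fun ω => g ω i) μ from prodInt i) hgii
      exact this
    have h2 : μ[fun ω => g ω i|m] =ᵐ[μ] fun ω => F ω i := by
      have h3 := sgd_condexp_clm hm (EuclideanSpace.proj (𝕜 := ℝ) i) hgi
      have h4 : (fun ω => (EuclideanSpace.proj (𝕜 := ℝ) i) ((μ[g|m]) ω)) =ᵐ[μ]
          fun ω => F ω i := by
        filter_upwards [hcond] with ω hω
        simp [hω]
      exact (h3.symm.trans h4)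
    calc ∫ ω, F ω i * g ω i ∂μ = ∫ ω, (μ[fun ω => F ω i * g ω i|m]) ω ∂μ :=
          (integral_condExp hm).symm
      _ = ∫ ω, F ω i * F ω i ∂μ := by
          apply integral_congr_ae
          filter_upwards [h1, h2] with ω hω1 hω2
          rw [hω1]
          simp only [Pi.mul_apply]
          rw [hω2]
  calc ∫ ω, (inner ℝ (F ω) (g ω) : ℝ) ∂μ = ∫ ω, ∑ i, F ω i * g ω i ∂μ := by
        apply integral_congr_ae
        filter_upwards with ω
        simp [PiLp.inner_apply, mul_comm]
    _ = ∑ i, ∫ ω, F ω i * g ω i ∂μ := integral_finset_sum _ (fun i _ => prodInt i)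
    _ = ∑ i, ∫ ω, F ω i * F ω i ∂μ := by
        exact Finset.sum_congr rfl (fun i _ => hkey i)
    _ = ∫ ω, ∑ i, F ω i * F ω i ∂μ := (integral_finset_sum _ (fun i _ => sqInt i)).symm
    _ = ∫ ω, ‖F ω‖ ^ 2 ∂μ := by
        apply integral_congr_ae
        filter_upwards with ω
        rw [euclid_norm_sq_eq]
        simp [pow_two]

set_option maxHeartbeats 1000000 in
/-- approximately convex case. Under the SGD setup, suppose additionally
there are `0 < c ≤ C` with `c·f(w) ≤ ‖∇f(w)‖² ≤ C·f(w)` and `c·‖w‖² ≤ f(w) ≤ C·‖w‖²` for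
all `w`; the steps are nonincreasing with `0 ≤ α_m ≤ 1/L`, `∑ α_m = ∞`, `α_m → 0`; and
`E[f(w_0)] < ∞` (sequences indexed from `0`). Then `E[f(w_m)] → 0`, `E[‖w_m‖²] → 0` and
`E[‖∇f(w_m)‖²] → 0`; in particular `w_m → 0` in probability. -/
theorem stmt11 {d : ℕ} (f : EuclideanSpace ℝ (Fin d) → ℝ) (L σ : ℝ)
        (hf : ContDiff ℝ 2 f) (hf0 : ∀ x, 0 ≤ f x)
        (hHess : ∀ x, ‖fderiv ℝ (gradient f) x‖ ≤ L) (hL : 0 < L)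
        {Ω : Type*} [inst : MeasurableSpace Ω] (μ : Measure Ω) [IsProbabilityMeasure μ]
        (𝓕 : ℕ → MeasurableSpace Ω) (h𝓕 : ∀ m, 𝓕 m ≤ inst)
        (w g : ℕ → Ω → EuclideanSpace ℝ (Fin d)) (α : ℕ → ℝ)
        (hw : ∀ m, StronglyMeasurable[𝓕 m] (w m))
        (hg : ∀ m, AEStronglyMeasurable (g m) μ)
        (hiter : ∀ m, ∀ ω, w (m + 1) ω = w m ω - α m • g m ω)
        (hunbiased : ∀ m, μ[g m | 𝓕 m] =ᵐ[μ] fun ω => gradient f (w m ω))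
        (hg2 : ∀ m, Integrable (fun ω => ‖g m ω‖ ^ 2) μ)
        (hvar : ∀ m, ∫ ω, (‖g m ω‖ ^ 2 - ‖gradient f (w m ω)‖ ^ 2) ∂μ ≤ σ ^ 2)
        (hα : ∀ m, 0 ≤ α m) (hαL : ∀ m, α m ≤ 1 / L)
    (c C : ℝ) (hc : 0 < c) (hcC : c ≤ C)
    (hac1 : ∀ x, c * f x ≤ ‖gradient f x‖ ^ 2 ∧ ‖gradient f x‖ ^ 2 ≤ C * f x)
    (hac2 : ∀ x, c * ‖x‖ ^ 2 ≤ f x ∧ f x ≤ C * ‖x‖ ^ 2)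
    (hmono : Antitone α)
    (hdiv : Tendsto (fun M => ∑ m ∈ Finset.range M, α m) atTop atTop)
    (hα0 : Tendsto α atTop (nhds 0))
    (hint : Integrable (fun ω => f (w 0 ω)) μ) :
    Tendsto (fun m => ∫ ω, f (w m ω) ∂μ) atTop (nhds 0) ∧
      Tendsto (fun m => ∫ ω, ‖w m ω‖ ^ 2 ∂μ) atTop (nhds 0) ∧
      Tendsto (fun m => ∫ ω, ‖gradient f (w m ω)‖ ^ 2 ∂μ) atTop (nhds 0) ∧
      ∀ ε : ℝ, 0 < ε → Tendsto (fun m => μ {ω | ε < ‖w m ω‖}) atTop (nhds 0) := by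
  by_cases hftriv : ∀ x, f x = 0
  · -- trivial case : the space is degenerate
    have hnorm0 : ∀ x : EuclideanSpace ℝ (Fin d), ‖x‖ = 0 := by
      intro x
      have h1 := (hac2 x).1
      rw [hftriv x] at h1
      have : ‖x‖ ^ 2 ≤ 0 := by nlinarith
      nlinarith [norm_nonneg x, sq_nonneg ‖x‖]
    have hgrad0 : ∀ x : EuclideanSpace ℝ (Fin d), ‖gradient f x‖ ^ 2 = 0 := by
      intro x
      have h1 := (hac1 x).2
      rw [hftriv x] at h1
      nlinarith [sq_nonneg ‖gradient f x‖]
    refine ⟨?_, ?_, ?_, ?_⟩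
    · have h0 : (fun m => ∫ ω, f (w m ω) ∂μ) = fun _ => (0:ℝ) :=
        funext fun m => by simp [hftriv]
      rw [h0]; exact tendsto_const_nhds
    · have h0 : (fun m => ∫ ω, ‖w m ω‖ ^ 2 ∂μ) = fun _ => (0:ℝ) :=
        funext fun m => by simp [hnorm0]
      rw [h0]; exact tendsto_const_nhds
    · have h0 : (fun m => ∫ ω, ‖gradient f (w m ω)‖ ^ 2 ∂μ) = fun _ => (0:ℝ) := by
        funext m
        have : (fun ω => ‖gradient f (w m ω)‖ ^ 2) = fun _ => (0:ℝ) :=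
          funext fun ω => hgrad0 (w m ω)
        rw [this]; simp
      rw [h0]; exact tendsto_const_nhds
    · intro ε hε
      have : ∀ m, {ω | ε < ‖w m ω‖} = (∅ : Set Ω) := by
        intro m
        ext ω
        simp [hnorm0, hε.le, not_lt.2 (by rw [hnorm0]; exact hε.le : ¬ ε < ‖w m ω‖)]
      simp only [this, measure_empty]
      exact tendsto_const_nhds
  -- main case
  push_neg at hftriv
  obtain ⟨x₀, hx₀⟩ := hftriv
  have hfx₀ : 0 < f x₀ := lt_of_le_of_ne (hf0 x₀) (Ne.symm hx₀)
  have hdiff : Differentiable ℝ f := hf.differentiable (by norm_num)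
  have hgraddiff : Differentiable ℝ (gradient f) := by
    have h1 : ContDiff ℝ 1 (fderiv ℝ f) := hf.fderiv_right (by norm_num)
    have h2 : Differentiable ℝ (fderiv ℝ f) := h1.differentiable (by norm_num)
    have h3 : Differentiable ℝ
        (fun p : EuclideanSpace ℝ (Fin d) →L[ℝ] ℝ =>
          (InnerProductSpace.toDual ℝ (EuclideanSpace ℝ (Fin d))).symm p) :=
      (InnerProductSpace.toDual ℝ (EuclideanSpace ℝ (Fin d))).symm.toContinuousLinearEquiv
        |>.toContinuousLinearMap.differentiable
    exact h3.comp h2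
  have hlip : LipschitzWith L.toNNReal (gradient f) := by
    apply lipschitzWith_of_nnnorm_fderiv_le hgraddiff
    intro x
    have h1 : (‖fderiv ℝ (gradient f) x‖₊ : ℝ) ≤ (L.toNNReal : ℝ) := by
      rw [coe_nnnorm, Real.coe_toNNReal L hL.le]
      exact hHess x
    exact_mod_cast h1
  have hdescent := sgd_descent f L hL.le hdiff hlip
  have hc2L : c ≤ 2 * L := by
    have h1 := (hac1 x₀).1
    have h2 := sgd_grad_sq_le f L hL hdiff hlip hf0 x₀
    have := le_trans h1 h2
    exact le_of_mul_le_mul_right (by linarith [mul_comm c (f x₀), mul_comm (2*L) (f x₀)]) hfx₀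
  have hgradcont : Continuous (gradient f) := hgraddiff.continuous
  have hwm : ∀ m, AEStronglyMeasurable (w m) μ :=
    fun m => ((hw m).mono (h𝓕 m)).aestronglyMeasurable
  have hfwm : ∀ m, AEStronglyMeasurable (fun ω => f (w m ω)) μ :=
    fun m => hf.continuous.comp_aestronglyMeasurable (hwm m)
  have hFm : ∀ m, AEStronglyMeasurable (fun ω => gradient f (w m ω)) μ :=
    fun m => hgradcont.comp_aestronglyMeasurable (hwm m)
  -- integrability of ‖∇f(w m)‖² given integrability of f(w m)
  have hF2 : ∀ m, Integrable (fun ω => f (w m ω)) μ →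
      Integrable (fun ω => ‖gradient f (w m ω)‖ ^ 2) μ := by
    intro m hi
    refine Integrable.mono' (hi.const_mul C) ((hFm m).norm.pow 2) ?_
    filter_upwards with ω
    rw [Real.norm_eq_abs, abs_of_nonneg (sq_nonneg _)]
    exact (hac1 (w m ω)).2
  -- integrability of the inner product term
  have hinnerI : ∀ m, Integrable (fun ω => f (w m ω)) μ →
      Integrable (fun ω => (inner ℝ (gradient f (w m ω)) (g m ω) : ℝ)) μ := by
    intro m hi
    refine Integrable.mono' (((hF2 m hi).add (hg2 m)).div_const 2)
      ((hFm m).inner (hg m)) ?_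
    filter_upwards with ω
    rw [Real.norm_eq_abs]
    simp only [Pi.add_apply]
    have h1 : |(inner ℝ (gradient f (w m ω)) (g m ω) : ℝ)|
        ≤ ‖gradient f (w m ω)‖ * ‖g m ω‖ := abs_real_inner_le_norm _ _
    nlinarith [sq_nonneg (‖gradient f (w m ω)‖ - ‖g m ω‖), norm_nonneg (gradient f (w m ω)),
      norm_nonneg (g m ω)]
  -- pointwise descent inequality
  have hpt : ∀ m ω, f (w (m + 1) ω) ≤ f (w m ω)
      - α m * (inner ℝ (gradient f (w m ω)) (g m ω) : ℝ)
      + (L / 2 * α m ^ 2) * ‖g m ω‖ ^ 2 := by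
    intro m ω
    have h := hdescent (w m ω) (w (m + 1) ω)
    have he : w (m + 1) ω - w m ω = -(α m • g m ω) := by
      rw [hiter m ω]; abel
    rw [he, inner_neg_right, real_inner_smul_right, norm_neg, norm_smul,
      Real.norm_eq_abs] at h
    have habs : (|α m| * ‖g m ω‖) ^ 2 = α m ^ 2 * ‖g m ω‖ ^ 2 := by
      rw [mul_pow, sq_abs]
    rw [habs] at h
    linarith
  -- integrability of f ∘ w m for all m
  have hInt : ∀ m, Integrable (fun ω => f (w m ω)) μ := by
    intro m
    induction m with
    | zero => exact hint
    | succ m ih =>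
      have hRHS : Integrable (fun ω => f (w m ω)
          - α m * (inner ℝ (gradient f (w m ω)) (g m ω) : ℝ)
          + (L / 2 * α m ^ 2) * ‖g m ω‖ ^ 2) μ :=
        (ih.sub ((hinnerI m ih).const_mul (α m))).add ((hg2 m).const_mul _)
      refine Integrable.mono' hRHS (hfwm (m + 1)) ?_
      filter_upwards with ω
      rw [Real.norm_eq_abs, abs_of_nonneg (hf0 _)]
      exact hpt m ω
  -- the expectation recursion
  have hrec : ∀ m, ∫ ω, f (w (m + 1) ω) ∂μ ≤
      (1 - c / 2 * α m) * ∫ ω, f (w m ω) ∂μ + (L * σ ^ 2 / 2) * α m ^ 2 := by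
    intro m
    set a := ∫ ω, f (w m ω) ∂μ with ha_def
    set S := ∫ ω, ‖gradient f (w m ω)‖ ^ 2 ∂μ with hS_def
    set G := ∫ ω, ‖g m ω‖ ^ 2 ∂μ with hG_def
    have hiI := hInt m
    have hF2' := hF2 m hiI
    have hinn := hinnerI m hiI
    have h1 : ∫ ω, f (w (m + 1) ω) ∂μ ≤ ∫ ω, (f (w m ω)
        - α m * (inner ℝ (gradient f (w m ω)) (g m ω) : ℝ)
        + (L / 2 * α m ^ 2) * ‖g m ω‖ ^ 2) ∂μ := by
      apply integral_mono (hInt (m + 1))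
        ((hiI.sub (hinn.const_mul (α m))).add ((hg2 m).const_mul _))
      intro ω
      exact hpt m ω
    have h2 : ∫ ω, (f (w m ω)
        - α m * (inner ℝ (gradient f (w m ω)) (g m ω) : ℝ)
        + (L / 2 * α m ^ 2) * ‖g m ω‖ ^ 2) ∂μ
        = a - α m * (∫ ω, (inner ℝ (gradient f (w m ω)) (g m ω) : ℝ) ∂μ)
          + (L / 2 * α m ^ 2) * G := by
      have hA : Integrable (fun ω => f (w m ω)
          - α m * (inner ℝ (gradient f (w m ω)) (g m ω) : ℝ)) μ :=
        hiI.sub (hinn.const_mul (α m))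
      have hB : Integrable (fun ω => (L / 2 * α m ^ 2) * ‖g m ω‖ ^ 2) μ :=
        (hg2 m).const_mul _
      have hC : Integrable (fun ω => α m * (inner ℝ (gradient f (w m ω)) (g m ω) : ℝ)) μ :=
        hinn.const_mul (α m)
      rw [integral_add hA hB, integral_sub hiI hC, integral_const_mul, integral_const_mul]
    have h3 : ∫ ω, (inner ℝ (gradient f (w m ω)) (g m ω) : ℝ) ∂μ = S := by
      exact sgd_inner_integral (h𝓕 m) (hgradcont.comp_stronglyMeasurable (hw m))
        (hg m) hF2' (hg2 m) (hunbiased m)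
    have h4 : G - S ≤ σ ^ 2 := by
      have := hvar m
      rwa [integral_sub (hg2 m) hF2'] at this
    have h5 : c * a ≤ S := by
      have h6 : ∫ ω, c * f (w m ω) ∂μ ≤ S := by
        apply integral_mono (hiI.const_mul c) hF2' (fun ω => (hac1 (w m ω)).1)
      rwa [integral_const_mul] at h6
    have hS0 : 0 ≤ S := integral_nonneg (fun ω => sq_nonneg _)
    have ha0 : 0 ≤ a := integral_nonneg (fun ω => hf0 _)
    have hLα : L * α m ≤ 1 := by
      have := hαL m
      rw [le_div_iff₀ hL] at this
      linarith [mul_comm (α m) L]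
    have hα0' := hα m
    have hσ2 : (0:ℝ) ≤ σ ^ 2 := sq_nonneg σ
    rw [h3] at h2
    rw [h2] at h1
    -- now pure algebra
    have t1 : (L / 2 * α m ^ 2) * G ≤ (L / 2 * α m ^ 2) * (S + σ ^ 2) :=
      mul_le_mul_of_nonneg_left (by linarith) (by positivity)
    have t3 : L / 2 * α m ^ 2 * S ≤ α m * S / 2 := by
      have h7 : (L * α m) * (α m * S) ≤ 1 * (α m * S) :=
        mul_le_mul_of_nonneg_right hLα (mul_nonneg hα0' hS0)
      nlinarith
    have t5 : α m * (c * a) ≤ α m * S := mul_le_mul_of_nonneg_left h5 hα0'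
    nlinarith
  -- conclude E f(w m) → 0
  have htend1 : Tendsto (fun m => ∫ ω, f (w m ω) ∂μ) atTop (nhds 0) := by
    apply sgd_seq_lemma _ (fun m => c / 2 * α m) ((L * σ ^ 2 / 2) * (2 / c) ^ 2)
      (mul_nonneg (div_nonneg (mul_nonneg hL.le (sq_nonneg σ)) (by norm_num)) (sq_nonneg _))
      (fun m => integral_nonneg (fun ω => hf0 _))
      (fun m => mul_nonneg (by positivity) (hα m))
    · intro m
      have h1 : c / 2 * α m ≤ L * α m :=
        mul_le_mul_of_nonneg_right (by linarith) (hα m)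
      have h2 : L * α m ≤ 1 := by
        have := hαL m
        rw [le_div_iff₀ hL] at this
        linarith [mul_comm (α m) L]
      linarith
    · intro m
      have heq : (L * σ ^ 2 / 2) * (2 / c) ^ 2 * (c / 2 * α m) ^ 2
          = (L * σ ^ 2 / 2) * α m ^ 2 := by
        field_simp
      rw [heq]
      exact hrec m
    · have := hα0.const_mul (c / 2)
      simpa using this
    · have h1 : Tendsto (fun M => c / 2 * ∑ m ∈ Finset.range M, α m) atTop atTop :=
        Tendsto.const_mul_atTop (by positivity) hdiv
      apply h1.congr
      intro M
      rw [Finset.mul_sum]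
  -- integrability of ‖w m‖²
  have hw2int : ∀ m, Integrable (fun ω => ‖w m ω‖ ^ 2) μ := by
    intro m
    refine Integrable.mono' ((hInt m).const_mul (1 / c)) ((hwm m).norm.pow 2) ?_
    filter_upwards with ω
    rw [Real.norm_eq_abs, abs_of_nonneg (sq_nonneg _)]
    have h := (hac2 (w m ω)).1
    rw [one_div, le_inv_mul_iff₀ hc]
    exact h
  have htend2 : Tendsto (fun m => ∫ ω, ‖w m ω‖ ^ 2 ∂μ) atTop (nhds 0) := by
    apply squeeze_zero (fun m => integral_nonneg (fun ω => sq_nonneg _))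
      (g := fun m => (1 / c) * ∫ ω, f (w m ω) ∂μ)
    · intro m
      have h1 : ∫ ω, c * ‖w m ω‖ ^ 2 ∂μ ≤ ∫ ω, f (w m ω) ∂μ :=
        integral_mono ((hw2int m).const_mul c) (hInt m) (fun ω => (hac2 (w m ω)).1)
      rw [integral_const_mul] at h1
      rw [one_div, le_inv_mul_iff₀ hc]
      exact h1
    · have := htend1.const_mul (1 / c)
      rwa [mul_zero] at this
  have htend3 : Tendsto (fun m => ∫ ω, ‖gradient f (w m ω)‖ ^ 2 ∂μ) atTop (nhds 0) := by
    apply squeeze_zero (fun m => integral_nonneg (fun ω => sq_nonneg _))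
      (g := fun m => C * ∫ ω, f (w m ω) ∂μ)
    · intro m
      have h1 : ∫ ω, ‖gradient f (w m ω)‖ ^ 2 ∂μ ≤ ∫ ω, C * f (w m ω) ∂μ :=
        integral_mono (hF2 m (hInt m)) ((hInt m).const_mul C) (fun ω => (hac1 (w m ω)).2)
      rwa [integral_const_mul] at h1
    · have := htend1.const_mul C
      rwa [mul_zero] at this
  refine ⟨htend1, htend2, htend3, ?_⟩
  intro ε hε
  have hsub : ∀ m, {ω | ε < ‖w m ω‖} ⊆ {ω | ε ^ 2 ≤ ‖w m ω‖ ^ 2} := by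
    intro m ω hω
    simp only [Set.mem_setOf_eq] at hω ⊢
    nlinarith [hε.le]
  have hcheb : ∀ m, (μ {ω | ε < ‖w m ω‖}).toReal ≤ (1 / ε ^ 2) * ∫ ω, ‖w m ω‖ ^ 2 ∂μ := by
    intro m
    have h1 : (μ {ω | ε < ‖w m ω‖}).toReal ≤ (μ {ω | ε ^ 2 ≤ ‖w m ω‖ ^ 2}).toReal :=
      ENNReal.toReal_mono (measure_ne_top μ _) (measure_mono (hsub m))
    have h2 : ε ^ 2 * (μ {ω | ε ^ 2 ≤ ‖w m ω‖ ^ 2}).toReal ≤ ∫ ω, ‖w m ω‖ ^ 2 ∂μ :=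
      mul_meas_ge_le_integral_of_nonneg
        (Filter.Eventually.of_forall (fun ω => sq_nonneg _)) (hw2int m) (ε ^ 2)
    have hε2 : (0:ℝ) < ε ^ 2 := by positivity
    calc (μ {ω | ε < ‖w m ω‖}).toReal ≤ (μ {ω | ε ^ 2 ≤ ‖w m ω‖ ^ 2}).toReal := h1
      _ = (1 / ε ^ 2) * (ε ^ 2 * (μ {ω | ε ^ 2 ≤ ‖w m ω‖ ^ 2}).toReal) := by
          field_simp
      _ ≤ (1 / ε ^ 2) * ∫ ω, ‖w m ω‖ ^ 2 ∂μ :=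
          mul_le_mul_of_nonneg_left h2 (by positivity)
  have hreal : Tendsto (fun m => (μ {ω | ε < ‖w m ω‖}).toReal) atTop (nhds 0) := by
    apply squeeze_zero (fun m => ENNReal.toReal_nonneg) hcheb
    have := htend2.const_mul (1 / ε ^ 2)
    rwa [mul_zero] at this
  have := ENNReal.tendsto_ofReal hreal
  rw [ENNReal.ofReal_zero] at this
  apply this.congr
  intro m
  exact ENNReal.ofReal_toReal (measure_ne_top μ _)
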